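/- Let λ > 0, w > 0, and let p_j, t_j, p_k, t_k : ℝ → ℝ be smooth functions satisfying p_j'' = λ p_j, t_j'' = λ t_j, p_k'' = λ p_k, t_k'' = λ t_k, together with the vertex conditions t_j'(0) = 0, t_k'(0) = 0, p_j(l) = t_j(l) = p_k(0), and p_j'(l) + w·t_j'(l) = p_k'(0), for some l > 0. Define p̃_j = p_j' + w t_j', t̃_j = p_j' − t_j', p̃_k = p_k' + w t_k', t̃_k = p_k' − t_k'. Then: (i) t̃_j'(l) = 0; (ii) p̃_j(l) = p̃_k(0) = t̃_k(0); (iii) p̃_j'(l) = p̃_k'(0) + w·t̃_k'(0). -/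

import Mathlib

theorem local_transplantation_degree_three_vertex (lam w l : ℝ)
    (hlam : 0 < lam) (hw : 0 < w) (hl : 0 < l)
    (pj tj pk tk : ℝ → ℝ)
    (hpj : ContDiff ℝ (⊤ : ℕ∞) pj) (htj : ContDiff ℝ (⊤ : ℕ∞) tj)
    (hpk : ContDiff ℝ (⊤ : ℕ∞) pk) (htk : ContDiff ℝ (⊤ : ℕ∞) tk)
    (hpje : ∀ x, deriv (deriv pj) x = lam * pj x)
    (htje : ∀ x, deriv (deriv tj) x = lam * tj x)
    (hpke : ∀ x, deriv (deriv pk) x = lam * pk x)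
    (htke : ∀ x, deriv (deriv tk) x = lam * tk x)
    (hNj : deriv tj 0 = 0) (hNk : deriv tk 0 = 0)
    (hcont1 : pj l = tj l) (hcont2 : tj l = pk 0)
    (hKirch : deriv pj l + w * deriv tj l = deriv pk 0) :
    deriv (fun x => deriv pj x - deriv tj x) l = 0 ∧
    ((deriv pj l + w * deriv tj l = deriv pk 0 + w * deriv tk 0) ∧
      (deriv pk 0 + w * deriv tk 0 = deriv pk 0 - deriv tk 0)) ∧
    deriv (fun x => deriv pj x + w * deriv tj x) l
      = deriv (fun x => deriv pk x + w * deriv tk x) 0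
        + w * deriv (fun x => deriv pk x - deriv tk x) 0 := by
  have dpj : Differentiable ℝ (deriv pj) := ((hpj.of_le (by simp)).iterate_deriv 1).differentiable (by simp)
  have dtj : Differentiable ℝ (deriv tj) := ((htj.of_le (by simp)).iterate_deriv 1).differentiable (by simp)
  have dpk : Differentiable ℝ (deriv pk) := ((hpk.of_le (by simp)).iterate_deriv 1).differentiable (by simp)
  have dtk : Differentiable ℝ (deriv tk) := ((htk.of_le (by simp)).iterate_deriv 1).differentiable (by simp)
  have h1 : deriv (fun x => deriv pj x - deriv tj x) l
      = deriv (deriv pj) l - deriv (deriv tj) l := by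
    rw [deriv_fun_sub (dpj l) (dtj l)]
  have h2 : deriv (fun x => deriv pj x + w * deriv tj x) l
      = deriv (deriv pj) l + w * deriv (deriv tj) l := by
    rw [deriv_fun_add (dpj l) ((dtj l).const_mul w), deriv_const_mul w (dtj l)]
  have h3 : deriv (fun x => deriv pk x + w * deriv tk x) 0
      = deriv (deriv pk) 0 + w * deriv (deriv tk) 0 := by
    rw [deriv_fun_add (dpk 0) ((dtk 0).const_mul w), deriv_const_mul w (dtk 0)]
  have h4 : deriv (fun x => deriv pk x - deriv tk x) 0
      = deriv (deriv pk) 0 - deriv (deriv tk) 0 := by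
    rw [deriv_fun_sub (dpk 0) (dtk 0)]
  refine ⟨?_, ⟨?_, ?_⟩, ?_⟩
  · rw [h1, hpje, htje, hcont1]; ring
  · rw [hNk]; linarith
  · rw [hNk]; ring
  · rw [h2, h3, h4, hpje, htje, hpke, htke, hcont1, hcont2]; ring
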